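/- arXiv:1705.04544 — 2 statements merged into one kernel-verified Lean document; each statement's English description precedes it below -/
import Mathlib

section
/- Let G be a bipartite graph with unit edge lengths and C ⊆ E(G) a set of edges. Then C is a (1,1)-contraction if and only if every two-element subset of C is a (1,1)-contraction. -/
open Classical

noncomputable def walkLen {V : Type*} (G : SimpleGraph V) (ℓ : Sym2 V → ℝ)
    {u v : V} (w : G.Walk u v) : ℝ := (w.edges.map ℓ).sum

noncomputable def gdist {V : Type*} (G : SimpleGraph V) (ℓ : Sym2 V → ℝ) (u v : V) : ℝ :=
  sInf {x : ℝ | ∃ w : G.Walk u v, walkLen G ℓ w = x}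

noncomputable def zeroOn {V : Type*} (ℓ : Sym2 V → ℝ) (C : Set (Sym2 V)) : Sym2 V → ℝ :=
  fun e => if e ∈ C then 0 else ℓ e

/-
Write `|w|_C` for the number of edges of a walk `w` outside `C`, i.e. its length once `C` is
contracted. By induction along `w : u ⟶ v`, either `dist u v ≤ |w|_C`, or some `xy ∈ C` has
`dist u x + dist y v ≤ |w|_C`; either way `dist u v ≤ |w|_C + 1`. When an edge `ab ∈ C` is
prepended to a walk of the second kind, the two contracted edges together cost nothing:
`{ab, xy}` being a (1,1)-contraction gives `dist a y ≤ dist b x + 1`, and as `G` is bipartite the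
closed walk `a b ⋯ x y ⋯ a` has even length, so `dist a y ≤ dist b x`.
-/

namespace SimpleGraph

variable {V : Type*} {G : SimpleGraph V}

def IsOneOneContraction (G : SimpleGraph V) (C : Set (Sym2 V)) : Prop :=
  ∀ u v : V, gdist G (fun _ => (1 : ℝ)) u v - 1 ≤ gdist G (zeroOn (fun _ => (1 : ℝ)) C) u v

noncomputable def Walk.outsideCount (C : Set (Sym2 V)) {u v : V} (w : G.Walk u v) : ℕ :=
  w.edges.countP (· ∉ C)

namespace Walk

variable {C : Set (Sym2 V)}

@[simp]
lemma outsideCount_nil {u : V} : (nil : G.Walk u u).outsideCount C = 0 := rfl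

lemma outsideCount_cons_of_mem {u v w : V} (h : G.Adj u v) (p : G.Walk v w) (he : s(u, v) ∈ C) :
    (cons h p).outsideCount C = p.outsideCount C := by
  simp [outsideCount, he]

lemma outsideCount_cons_of_notMem {u v w : V} (h : G.Adj u v) (p : G.Walk v w)
    (he : s(u, v) ∉ C) : (cons h p).outsideCount C = p.outsideCount C + 1 := by
  simp [outsideCount, he]

lemma outsideCount_append {u v w : V} (p : G.Walk u v) (q : G.Walk v w) :
    (p.append q).outsideCount C = p.outsideCount C + q.outsideCount C := by
  simp [outsideCount, List.countP_append]

lemma outsideCount_le_length {u v : V} (p : G.Walk u v) : p.outsideCount C ≤ p.length :=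
  p.length_edges ▸ List.countP_le_length

lemma outsideCount_anti {D : Set (Sym2 V)} (hCD : C ⊆ D) {u v : V} (p : G.Walk u v) :
    p.outsideCount D ≤ p.outsideCount C :=
  List.countP_mono_left fun _ _ h => by
    simp only [decide_eq_true_eq] at h ⊢
    exact fun he => h (hCD he)

end Walk

lemma walkLen_cons (ℓ : Sym2 V → ℝ) {u v w : V} (h : G.Adj u v) (p : G.Walk v w) :
    walkLen G ℓ (Walk.cons h p) = ℓ s(u, v) + walkLen G ℓ p := by
  simp [walkLen]

lemma walkLen_one {u v : V} (p : G.Walk u v) : walkLen G (fun _ => (1 : ℝ)) p = p.length := by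
  induction p with
  | nil => simp [walkLen]
  | cons h p ih => rw [walkLen_cons, ih, Walk.length_cons]; push_cast; ring

lemma walkLen_zeroOn_one (C : Set (Sym2 V)) {u v : V} (p : G.Walk u v) :
    walkLen G (zeroOn (fun _ => (1 : ℝ)) C) p = p.outsideCount C := by
  induction p with
  | nil => simp [walkLen]
  | @cons u v w h p ih =>
    by_cases he : s(u, v) ∈ C
    · rw [walkLen_cons, ih, Walk.outsideCount_cons_of_mem h p he, zeroOn, if_pos he, zero_add]
    · rw [walkLen_cons, ih, Walk.outsideCount_cons_of_notMem h p he, zeroOn, if_neg he]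
      push_cast; ring

lemma zeroOn_one_nonneg (C : Set (Sym2 V)) (e : Sym2 V) : 0 ≤ zeroOn (fun _ => (1 : ℝ)) C e := by
  unfold zeroOn; split_ifs <;> norm_num

section gdist

variable {ℓ : Sym2 V → ℝ}

lemma walkLen_nonneg (hℓ : ∀ e, 0 ≤ ℓ e) {u v : V} (p : G.Walk u v) : 0 ≤ walkLen G ℓ p :=
  List.sum_nonneg fun _ hx => by
    obtain ⟨e, -, rfl⟩ := List.mem_map.mp hx
    exact hℓ e

lemma gdist_le_walkLen (hℓ : ∀ e, 0 ≤ ℓ e) {u v : V} (p : G.Walk u v) :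
    gdist G ℓ u v ≤ walkLen G ℓ p :=
  csInf_le ⟨0, by rintro _ ⟨q, rfl⟩; exact walkLen_nonneg hℓ q⟩ ⟨p, rfl⟩

lemma Reachable.le_gdist_iff {u v : V} (huv : G.Reachable u v) (hℓ : ∀ e, 0 ≤ ℓ e) {a : ℝ} :
    a ≤ gdist G ℓ u v ↔ ∀ p : G.Walk u v, a ≤ walkLen G ℓ p := by
  refine ⟨fun h p => h.trans (gdist_le_walkLen hℓ p), fun h => ?_⟩
  exact le_csInf ⟨_, huv.some, rfl⟩ (by rintro _ ⟨p, rfl⟩; exact h p)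

lemma Connected.gdist_one (hconn : G.Connected) (u v : V) :
    gdist G (fun _ => (1 : ℝ)) u v = G.dist u v := by
  obtain ⟨p, hp⟩ := hconn.exists_walk_length_eq_dist u v
  refine le_antisymm ?_ ?_
  · simpa [walkLen_one, hp] using gdist_le_walkLen (fun _ => zero_le_one) p
  · refine ((hconn u v).le_gdist_iff fun _ => zero_le_one).2 fun q => ?_
    rw [walkLen_one]
    exact_mod_cast dist_le q

end gdist

lemma Connected.isOneOneContraction_iff (hconn : G.Connected) (C : Set (Sym2 V)) :
    IsOneOneContraction G C ↔
      ∀ (u v : V) (p : G.Walk u v), G.dist u v ≤ p.outsideCount C + 1 := by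
  refine forall₂_congr fun u v => ?_
  rw [hconn.gdist_one, (hconn u v).le_gdist_iff (zeroOn_one_nonneg C)]
  refine forall_congr' fun p => ?_
  rw [walkLen_zeroOn_one, sub_le_iff_le_add]
  exact_mod_cast Iff.rfl

lemma IsOneOneContraction.anti (hconn : G.Connected) {C D : Set (Sym2 V)}
    (hD : IsOneOneContraction G D) (hCD : C ⊆ D) : IsOneOneContraction G C := by
  rw [hconn.isOneOneContraction_iff] at hD ⊢
  exact fun u v p => (hD u v p).trans (by gcongr; exact Walk.outsideCount_anti hCD p)

lemma Connected.dist_le_dist_of_isOneOneContraction_pair (hconn : G.Connected)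
    (hbip : G.Colorable 2) {a b x y : V} (hab : G.Adj a b) (hxy : G.Adj x y)
    (h : G.IsOneOneContraction {s(a, b), s(x, y)}) : G.dist a y ≤ G.dist b x := by
  obtain ⟨p, hp⟩ := hconn.exists_walk_length_eq_dist b x
  obtain ⟨q, hq⟩ := hconn.exists_walk_length_eq_dist y a
  have hle : G.dist a y ≤ G.dist b x + 1 := by
    have hW := (hconn.isOneOneContraction_iff _).1 h a y (.cons hab (p.append (.cons hxy .nil)))
    rw [Walk.outsideCount_cons_of_mem _ _ (by simp), Walk.outsideCount_append,
      Walk.outsideCount_cons_of_mem _ _ (by simp), Walk.outsideCount_nil] at hW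
    have := p.outsideCount_le_length (C := {s(a, b), s(x, y)})
    omega
  have heven := two_colorable_iff_forall_loop_even.1 hbip a (.cons hab (p.append (.cons hxy q)))
  rw [Walk.length_cons, Walk.length_append, Walk.length_cons, hp, hq, dist_comm (u := y),
    Nat.even_iff] at heven
  omega

lemma dist_le_dist_of_mem_of_pairwise (hconn : G.Connected) (hbip : G.Colorable 2)
    {C : Set (Sym2 V)} (hC : C ⊆ G.edgeSet)
    (hpair : ∀ e ∈ C, ∀ f ∈ C, e ≠ f → G.IsOneOneContraction {e, f})
    {a b x y : V} (hab : s(a, b) ∈ C) (hxy : s(x, y) ∈ C) : G.dist a y ≤ G.dist b x := by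
  by_cases hef : s(a, b) = s(x, y)
  · rcases Sym2.eq_iff.1 hef with ⟨rfl, rfl⟩ | ⟨rfl, rfl⟩
    · exact dist_comm.le
    · simp
  · exact hconn.dist_le_dist_of_isOneOneContraction_pair hbip (hC hab) (hC hxy)
      (hpair _ hab _ hxy hef)

lemma Walk.dist_le_outsideCount_or_exists (hconn : G.Connected) (hbip : G.Colorable 2)
    {C : Set (Sym2 V)} (hC : C ⊆ G.edgeSet)
    (hpair : ∀ e ∈ C, ∀ f ∈ C, e ≠ f → G.IsOneOneContraction {e, f}) {u v : V}
    (p : G.Walk u v) :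
    G.dist u v ≤ p.outsideCount C ∨
      ∃ x y, s(x, y) ∈ C ∧ G.dist u x + G.dist y v ≤ p.outsideCount C := by
  induction p with
  | nil => simp
  | @cons a b v hab p ih =>
    have hdab : G.dist a b = 1 := dist_eq_one_iff_adj.2 hab
    by_cases he : s(a, b) ∈ C
    · rw [outsideCount_cons_of_mem _ _ he]
      rcases ih with h | ⟨x, y, hxy, h⟩
      · exact Or.inr ⟨a, b, he, by simpa using h⟩
      · have hay := dist_le_dist_of_mem_of_pairwise hconn hbip hC hpair he hxy
        have := hconn.dist_triangle (u := a) (v := y) (w := v)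
        omega
    · rw [outsideCount_cons_of_notMem _ _ he]
      rcases ih with h | ⟨x, y, hxy, h⟩
      · have := hconn.dist_triangle (u := a) (v := b) (w := v)
        omega
      · have := hconn.dist_triangle (u := a) (v := b) (w := x)
        exact Or.inr ⟨x, y, hxy, by omega⟩

end SimpleGraph

theorem bipartite_pairwise_contraction_general {V : Type*} (G : SimpleGraph V)
    (hconn : G.Connected) (hbip : G.Colorable 2)
    (C : Set (Sym2 V)) (hC : C ⊆ G.edgeSet) :
    (∀ u v : V, gdist G (fun _ => (1 : ℝ)) u v - 1 ≤
        gdist G (zeroOn (fun _ => (1 : ℝ)) C) u v) ↔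
    (∀ e ∈ C, ∀ f ∈ C, e ≠ f →
      ∀ u v : V, gdist G (fun _ => (1 : ℝ)) u v - 1 ≤
        gdist G (zeroOn (fun _ => (1 : ℝ)) ({e, f} : Set (Sym2 V))) u v) := by
  change G.IsOneOneContraction C ↔ ∀ e ∈ C, ∀ f ∈ C, e ≠ f → G.IsOneOneContraction {e, f}
  refine ⟨fun h e he f hf _ => h.anti hconn (Set.pair_subset he hf), fun hpair => ?_⟩
  refine (hconn.isOneOneContraction_iff C).2 fun u v p => ?_
  rcases p.dist_le_outsideCount_or_exists hconn hbip hC hpair with h | ⟨x, y, hxy, h⟩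
  · omega
  · have hdxy : G.dist x y = 1 := SimpleGraph.dist_eq_one_iff_adj.2 (hC hxy)
    have := hconn.dist_triangle (u := u) (v := x) (w := y)
    have := hconn.dist_triangle (u := u) (v := y) (w := v)
    omega

theorem bipartite_pairwise_contraction {V : Type*} [Fintype V] (G : SimpleGraph V)
    (hconn : G.Connected) (hbip : G.Colorable 2)
    (C : Set (Sym2 V)) (hC : C ⊆ G.edgeSet) :
    (∀ u v : V, gdist G (fun _ => (1 : ℝ)) u v - 1 ≤
        gdist G (zeroOn (fun _ => (1 : ℝ)) C) u v) ↔
    (∀ e ∈ C, ∀ f ∈ C, e ≠ f →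
      ∀ u v : V, gdist G (fun _ => (1 : ℝ)) u v - 1 ≤
        gdist G (zeroOn (fun _ => (1 : ℝ)) ({e, f} : Set (Sym2 V))) u v) :=
  bipartite_pairwise_contraction_general G hconn hbip C hC
end

section
/- Let k ≥ 1 be real and let G be a graph with unit edge lengths partitioned into clusters P₁,...,P_l with centers p_i ∈ P_i such that dist(p_i, u) ≤ k − 1 for all u ∈ P_i. Let C be the set of all edges with both endpoints in the same cluster. Then C is a (2k−1, 1)-contraction: for all vertices u, v, dist_{ℓ_C}(u,v) ≥ dist(u,v)/(2k−1) − 1. -/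
open Classical

/-!
Walk from `u` to `v` and track the distance from the centre of the current cluster to `v`.
An edge inside a cluster keeps the centre; across an edge `a x` leaving a cluster,
`dist(c a, v) ≤ dist(c a, a) + 1 + dist(x, c x) + dist(c x, v)`, so that distance changes by at
most `(k - 1) + 1 + (k - 1) = 2k - 1`. Hence
`dist(u, v) ≤ (k - 1) + (2k - 1) · (number of inter-cluster edges) + (k - 1)`.
-/

section WalkLength

variable {V : Type*} {G : SimpleGraph V} {ℓ : Sym2 V → ℝ}

lemma walkLen_nil (u : V) : walkLen G ℓ (SimpleGraph.Walk.nil : G.Walk u u) = 0 := rfl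

lemma walkLen_cons {u x v : V} (h : G.Adj u x) (w : G.Walk x v) :
    walkLen G ℓ (.cons h w) = ℓ s(u, x) + walkLen G ℓ w := by
  simp [walkLen]

lemma walkLen_append {u x v : V} (w₁ : G.Walk u x) (w₂ : G.Walk x v) :
    walkLen G ℓ (w₁.append w₂) = walkLen G ℓ w₁ + walkLen G ℓ w₂ := by
  simp [walkLen]

lemma walkLen_reverse {u v : V} (w : G.Walk u v) : walkLen G ℓ w.reverse = walkLen G ℓ w := by
  simp [walkLen, List.sum_reverse]

lemma walkLen_nonneg (hℓ : ∀ e, 0 ≤ ℓ e) {u v : V} (w : G.Walk u v) : 0 ≤ walkLen G ℓ w :=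
  List.sum_nonneg <| by simpa using fun e _ => hℓ e

lemma gdist_le_walkLen (hℓ : ∀ e, 0 ≤ ℓ e) {u v : V} (w : G.Walk u v) :
    gdist G ℓ u v ≤ walkLen G ℓ w :=
  csInf_le ⟨0, by rintro _ ⟨w', rfl⟩; exact walkLen_nonneg hℓ w'⟩ ⟨w, rfl⟩

lemma gdist_le_of_adj (hℓ : ∀ e, 0 ≤ ℓ e) {u v : V} (h : G.Adj u v) :
    gdist G ℓ u v ≤ ℓ s(u, v) := by
  simpa [walkLen_cons, walkLen_nil] using gdist_le_walkLen hℓ h.toWalk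

lemma le_gdist_of_forall_walk {u v : V} (huv : G.Reachable u v) {x : ℝ}
    (h : ∀ w : G.Walk u v, x ≤ walkLen G ℓ w) : x ≤ gdist G ℓ u v :=
  le_csInf (huv.elim fun w => ⟨_, w, rfl⟩) (by rintro _ ⟨w, rfl⟩; exact h w)

lemma gdist_comm (u v : V) : gdist G ℓ u v = gdist G ℓ v u := by
  unfold gdist
  congr 1
  ext x
  constructor <;> rintro ⟨w, rfl⟩ <;> exact ⟨w.reverse, walkLen_reverse w⟩

lemma gdist_triangle (hconn : G.Connected) (hℓ : ∀ e, 0 ≤ ℓ e) (u x v : V) :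
    gdist G ℓ u v ≤ gdist G ℓ u x + gdist G ℓ x v := by
  suffices gdist G ℓ u v - gdist G ℓ x v ≤ gdist G ℓ u x by linarith
  refine le_gdist_of_forall_walk (hconn u x) fun w₁ => ?_
  suffices gdist G ℓ u v - walkLen G ℓ w₁ ≤ gdist G ℓ x v by linarith
  refine le_gdist_of_forall_walk (hconn x v) fun w₂ => ?_
  have := gdist_le_walkLen hℓ (w₁.append w₂)
  rw [walkLen_append] at this
  linarith

end WalkLength

lemma gdist_center_le_walkLen_zeroOn {V : Type*} {G : SimpleGraph V} (hconn : G.Connected)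
    {r : ℝ} {c : V → V} (hrad : ∀ u, gdist G (fun _ => 1) (c u) u ≤ r)
    {C : Set (Sym2 V)} (hC : ∀ x y, s(x, y) ∈ C → c x = c y) {a b : V} (w : G.Walk a b) :
    gdist G (fun _ => 1) (c a) b ≤ (2 * r + 1) * walkLen G (zeroOn (fun _ => 1) C) w + r := by
  have hnn : ∀ e : Sym2 V, (0 : ℝ) ≤ 1 := fun _ => zero_le_one
  induction w with
  | nil => simpa [walkLen_nil] using hrad _
  | @cons a x b hax w ih =>
    rw [walkLen_cons]
    by_cases hmem : s(a, x) ∈ C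
    · simpa [zeroOn, hmem, hC a x hmem] using ih
    · have h_rad_x := hrad x
      rw [gdist_comm] at h_rad_x
      have h_edge : zeroOn (fun _ => 1) C s(a, x) = (1 : ℝ) := if_neg hmem
      rw [h_edge]
      calc gdist G (fun _ => 1) (c a) b
          ≤ gdist G (fun _ => 1) (c a) a + gdist G (fun _ => 1) a x
              + gdist G (fun _ => 1) x (c x) + gdist G (fun _ => 1) (c x) b := by
            linarith [gdist_triangle hconn hnn (c a) a b, gdist_triangle hconn hnn a x b,
              gdist_triangle hconn hnn x (c x) b]
        _ ≤ r + 1 + r + ((2 * r + 1) * walkLen G (zeroOn (fun _ => 1) C) w + r) := by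
            linarith [hrad a, gdist_le_of_adj hnn hax]
        _ = (2 * r + 1) * (1 + walkLen G (zeroOn (fun _ => 1) C) w) + r := by ring

theorem cluster_contraction_general {V : Type*} (G : SimpleGraph V) (hconn : G.Connected)
    (k : ℝ) (hk : 1 ≤ k) (c : V → V)
    (hrad : ∀ u, gdist G (fun _ => (1 : ℝ)) (c u) u ≤ k - 1)
    (C : Set (Sym2 V))
    (hC : C = {e | e ∈ G.edgeSet ∧ ∃ x y : V, e = s(x, y) ∧ c x = c y}) :
    ∀ u v : V, gdist G (fun _ => (1 : ℝ)) u v / (2 * k - 1) - 1 ≤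
      gdist G (zeroOn (fun _ => (1 : ℝ)) C) u v := by
  intro u v
  have hC_intra : ∀ x y, s(x, y) ∈ C → c x = c y := by
    rintro x y hxy
    obtain ⟨-, x', y', hxy, hc⟩ := hC ▸ hxy
    rcases Sym2.eq_iff.1 hxy with ⟨rfl, rfl⟩ | ⟨rfl, rfl⟩
    exacts [hc, hc.symm]
  refine le_gdist_of_forall_walk (hconn u v) fun w => ?_
  have h_center := gdist_center_le_walkLen_zeroOn hconn hrad hC_intra w
  have h_triangle := gdist_triangle hconn (fun _ => zero_le_one) u (c u) v
  have h_rad := hrad u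
  rw [gdist_comm] at h_rad
  rw [sub_le_iff_le_add, div_le_iff₀ (by linarith)]
  linarith

theorem cluster_contraction {V : Type*} [Fintype V] (G : SimpleGraph V) (hconn : G.Connected)
    (k : ℝ) (hk : 1 ≤ k) (c : V → V) (hcc : ∀ u, c (c u) = c u)
    (hrad : ∀ u, gdist G (fun _ => (1 : ℝ)) (c u) u ≤ k - 1)
    (C : Set (Sym2 V))
    (hC : C = {e | e ∈ G.edgeSet ∧ ∃ x y : V, e = s(x, y) ∧ c x = c y}) :
    ∀ u v : V, gdist G (fun _ => (1 : ℝ)) u v / (2 * k - 1) - 1 ≤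
      gdist G (zeroOn (fun _ => (1 : ℝ)) C) u v :=
  cluster_contraction_general G hconn k hk c hrad C hC
end
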